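/- arXiv:2409.06086 — 2 statements merged into one kernel-verified Lean document; each statement's English description precedes it below -/
import Mathlib

section
/- Define sequences p, q by p(-1)=1, p(0)=0, q(-1)=0, q(0)=1, and for n ≥ 1: p(n) = (2n²-2n+1)·p(n-1) + b(n-1)·p(n-2), q(n) = (2n²-2n+1)·q(n-1) + b(n-1)·q(n-2), where b(0)=6 and b(n) = -n⁴ for n ≥ 1. Then p(n)/q(n) converges to π² as n → ∞. -/
/-!
The recurrence is Euler's continued fraction for the series `∑ 1/n²`: the denominators are
`q n = (n!)²` and the numerators `p n = 6 (n!)² ∑_{k=1}^n 1/k²`, as one checks by substituting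
them into the three-term recurrence. Hence `p n / q n` is six times a partial sum of `ζ(2) = π²/6`.
-/

open Filter Real Finset
open scoped Nat

theorem eq_of_two_step_recurrence {α : Type*} {u v : ℕ → α} (F : ℕ → α → α → α)
    (hu : ∀ n, u (n + 2) = F n (u n) (u (n + 1))) (hv : ∀ n, v (n + 2) = F n (v n) (v (n + 1)))
    (h0 : u 0 = v 0) (h1 : u 1 = v 1) : u = v := by
  funext n
  induction n using Nat.twoStepInduction with
  | zero => exact h0
  | one => exact h1
  | more n ih₀ ih₁ => rw [hu, hv, ih₀, ih₁]

/-- The continued-fraction recurrence at index `n + 2`, where `a (n + 2) = (n + 2)² + (n + 1)²`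
and `b (n + 1) = -(n + 1)⁴`. -/
def BaselRecurrence (u : ℕ → ℝ) : Prop :=
  ∀ n : ℕ, u (n + 2) = (((n : ℝ) + 2) ^ 2 + ((n : ℝ) + 1) ^ 2) * u (n + 1) - ((n : ℝ) + 1) ^ 4 * u n

theorem BaselRecurrence.eq {u v : ℕ → ℝ} (hu : BaselRecurrence u) (hv : BaselRecurrence v)
    (h0 : u 0 = v 0) (h1 : u 1 = v 1) : u = v :=
  eq_of_two_step_recurrence
    (fun n x y => (((n : ℝ) + 2) ^ 2 + ((n : ℝ) + 1) ^ 2) * y - ((n : ℝ) + 1) ^ 4 * x) hu hv h0 h1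

theorem baselRecurrence_of_int {r b : ℤ → ℝ} (hb : ∀ n : ℤ, 1 ≤ n → b n = -(n : ℝ) ^ 4)
    (hr : ∀ n : ℤ, 1 ≤ n →
      r n = (2 * (n : ℝ) ^ 2 - 2 * (n : ℝ) + 1) * r (n - 1) + b (n - 1) * r (n - 2)) :
    BaselRecurrence (fun n : ℕ => r n) := by
  intro n
  have hbn : b ((n + 1 : ℕ) : ℤ) = -((n : ℝ) + 1) ^ 4 := by
    rw [hb _ (by omega)]
    push_cast
    ring
  have hrn := hr ((n + 2 : ℕ) : ℤ) (by omega)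
  rw [show ((n + 2 : ℕ) : ℤ) - 1 = (n + 1 : ℕ) by omega,
    show ((n + 2 : ℕ) : ℤ) - 2 = n by omega, hbn] at hrn
  dsimp only
  rw [hrn]
  push_cast
  ring

theorem baselRecurrence_factorial_sq : BaselRecurrence fun n => (n ! : ℝ) ^ 2 := by
  intro n
  simp only [Nat.factorial_succ]
  push_cast
  ring

noncomputable def baselPartialSum (n : ℕ) : ℝ :=
  ∑ k ∈ range n, 1 / ((k : ℝ) + 1) ^ 2

theorem baselPartialSum_succ (n : ℕ) :
    baselPartialSum (n + 1) = baselPartialSum n + 1 / ((n : ℝ) + 1) ^ 2 :=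
  sum_range_succ _ _

theorem baselRecurrence_factorial_sq_mul_baselPartialSum :
    BaselRecurrence fun n => 6 * (n ! : ℝ) ^ 2 * baselPartialSum n := by
  intro n
  have h₁ : ((n : ℝ) + 1) ≠ 0 := by positivity
  have h₂ : ((n : ℝ) + 2) ≠ 0 := by positivity
  simp only [baselPartialSum_succ, Nat.factorial_succ]
  push_cast
  field_simp
  ring

theorem tendsto_baselPartialSum : Tendsto baselPartialSum atTop (nhds (π ^ 2 / 6)) := by
  have h := hasSum_zeta_two.tendsto_sum_nat.comp (tendsto_add_atTop_nat 1)
  refine h.congr fun n => ?_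
  simp [baselPartialSum, sum_range_succ']

theorem pi_sq_cf (p q b : ℤ → ℝ)
    (hb0 : b 0 = 6) (hb : ∀ n : ℤ, 1 ≤ n → b n = -(n : ℝ) ^ 4)
    (hpm1 : p (-1) = 1) (hp0 : p 0 = 0) (hqm1 : q (-1) = 0) (hq0 : q 0 = 1)
    (hp : ∀ n : ℤ, 1 ≤ n →
      p n = (2 * (n : ℝ) ^ 2 - 2 * (n : ℝ) + 1) * p (n - 1) + b (n - 1) * p (n - 2))
    (hq : ∀ n : ℤ, 1 ≤ n →
      q n = (2 * (n : ℝ) ^ 2 - 2 * (n : ℝ) + 1) * q (n - 1) + b (n - 1) * q (n - 2)) :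
    Tendsto (fun n : ℕ => p n / q n) atTop (nhds (π ^ 2)) := by
  have hp1 : p 1 = 6 := by simpa [hp0, hpm1, hb0] using hp 1 le_rfl
  have hq1 : q 1 = 1 := by simpa [hq0, hqm1, hb0] using hq 1 le_rfl
  have hq_eq : (fun n : ℕ => q n) = fun n => (n ! : ℝ) ^ 2 :=
    (baselRecurrence_of_int hb hq).eq baselRecurrence_factorial_sq
      (by simpa using hq0) (by simpa using hq1)
  have hp_eq : (fun n : ℕ => p n) = fun n => 6 * (n ! : ℝ) ^ 2 * baselPartialSum n :=
    (baselRecurrence_of_int hb hp).eq baselRecurrence_factorial_sq_mul_baselPartialSum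
      (by simpa [baselPartialSum] using hp0) (by simpa [baselPartialSum] using hp1)
  have hratio (n : ℕ) : p n / q n = 6 * baselPartialSum n := by
    rw [congrFun hp_eq n, congrFun hq_eq n]
    field_simp
  simp_rw [hratio]
  simpa [mul_div_cancel₀] using tendsto_baselPartialSum.const_mul 6
end

section
/- 3·ζ(3) + 16·log 2 = 16 - 4·Σ_{n=0}^∞ (-1)^n / ((2n+1)·(2n+3)·(n+1)³). -/
/-!
Partial fractions give
`1 / ((2n+1)(2n+3)(n+1)³) = 4 / ((n+1)(2n+1)(2n+3)) - 1 / (n+1)³`.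
The alternating sum of `1 / (n+1)³` is `η(3) = (1 - 2⁻²) ζ(3) = 3 ζ(3) / 4`. Further,
`4 / ((n+1)(2n+1)(2n+3)) = -4 / (n+1) + 4 / (2n+1) + 4 / (2n+3)`: against the alternating sign
the last two terms telescope to `4`, and the first contributes `-4 η(1) = -4 log 2`.
-/

open Filter Topology Finset

theorem HasSum.neg_one_pow_mul {R : Type*} [Ring R] [TopologicalSpace R]
    [IsTopologicalAddGroup R] {f : ℕ → R} {a b : R} (he : HasSum (fun k ↦ f (2 * k)) a)
    (ho : HasSum (fun k ↦ f (2 * k + 1)) b) :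
    HasSum (fun n ↦ (-1) ^ n * f n) (a - b) := by
  rw [sub_eq_add_neg]
  refine HasSum.even_add_odd ?_ ?_
  · simpa [pow_mul] using he
  · simpa [pow_succ, pow_mul] using ho.neg

theorem summable_one_div_nat_add_one_pow {p : ℕ} (hp : 1 < p) :
    Summable fun n : ℕ ↦ 1 / ((n : ℝ) + 1) ^ p := by
  simpa using (summable_nat_add_iff 1).mpr (Real.summable_one_div_nat_pow.mpr hp)

theorem hasSum_neg_one_pow_div_nat_add_one_pow {p : ℕ} (hp : 1 < p) :
    HasSum (fun n : ℕ ↦ (-1 : ℝ) ^ n / ((n : ℝ) + 1) ^ p)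
      ((1 - 2 / 2 ^ p) * ∑' n : ℕ, 1 / ((n : ℝ) + 1) ^ p) := by
  set f : ℕ → ℝ := fun n ↦ 1 / ((n : ℝ) + 1) ^ p
  set S := ∑' n, f n
  have hf : Summable f := summable_one_div_nat_add_one_pow hp
  have hodd : HasSum (fun k ↦ f (2 * k + 1)) (S / 2 ^ p) := by
    have hfk : (fun k ↦ f (2 * k + 1)) = fun k ↦ f k / 2 ^ p := by
      funext k
      simp only [f]
      push_cast
      rw [show 2 * (k : ℝ) + 1 + 1 = 2 * (k + 1) by ring, mul_pow, div_div, mul_comm]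
    rw [hfk]
    exact hf.hasSum.div_const _
  have heven : HasSum (fun k ↦ f (2 * k)) (S - S / 2 ^ p) := by
    obtain ⟨t, ht⟩ : Summable fun k ↦ f (2 * k) :=
      hf.comp_injective (mul_right_injective₀ two_ne_zero)
    have hS : t + S / 2 ^ p = S := (ht.even_add_odd hodd).unique hf.hasSum
    rwa [show S - S / 2 ^ p = t by linarith]
  have h := heven.neg_one_pow_mul hodd
  rw [show S - S / 2 ^ p - S / 2 ^ p = (1 - 2 / 2 ^ p) * S by ring] at h
  simpa only [f, mul_one_div] using h

theorem sum_range_two_mul_neg_one_pow_div_nat_add_one (N : ℕ) :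
    ∑ n ∈ range (2 * N), (-1 : ℝ) ^ n / ((n : ℝ) + 1) = harmonic (2 * N) - harmonic N := by
  induction N with
  | zero => simp
  | succ N ih =>
    rw [mul_add_one, sum_range_succ, sum_range_succ, ih, harmonic_succ, harmonic_succ,
      harmonic_succ, pow_succ, pow_mul]
    push_cast
    field_simp
    ring

theorem tendsto_harmonic_two_mul_sub_harmonic :
    Tendsto (fun N : ℕ ↦ (harmonic (2 * N) : ℝ) - harmonic N) atTop (𝓝 (Real.log 2)) := by
  have h := Real.tendsto_harmonic_sub_log
  have h2 := h.comp (strictMono_mul_left_of_pos two_pos).tendsto_atTop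
  have key := (h2.sub h).add_const (Real.log 2)
  rw [sub_self, zero_add] at key
  refine key.congr' ?_
  filter_upwards [eventually_ne_atTop 0] with N hN
  simp only [Function.comp_apply]
  push_cast
  rw [Real.log_mul two_ne_zero (Nat.cast_ne_zero.mpr hN)]
  ring

theorem tendsto_sum_range_neg_one_pow_div_nat_add_one :
    Tendsto (fun N : ℕ ↦ ∑ n ∈ range N, (-1 : ℝ) ^ n / ((n : ℝ) + 1)) atTop
      (𝓝 (Real.log 2)) := by
  obtain ⟨l, hl⟩ := Antitone.tendsto_alternating_series_of_tendsto_zero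
    (fun _ _ ↦ Nat.one_div_le_one_div : Antitone fun n : ℕ ↦ 1 / ((n : ℝ) + 1))
    tendsto_one_div_add_atTop_nhds_zero_nat
  simp only [mul_one_div] at hl
  have heven := hl.comp (strictMono_mul_left_of_pos two_pos).tendsto_atTop
  have hlog := tendsto_harmonic_two_mul_sub_harmonic.congr fun N ↦
    (sum_range_two_mul_neg_one_pow_div_nat_add_one N).symm
  rwa [tendsto_nhds_unique heven hlog] at hl

theorem sum_range_neg_one_pow_mul_four_div (N : ℕ) :
    ∑ n ∈ range N, (-1 : ℝ) ^ n * 4 / (((n : ℝ) + 1) * (2 * n + 1) * (2 * n + 3)) =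
      4 - 4 * (-1) ^ N / (2 * N + 1) - 4 * ∑ n ∈ range N, (-1 : ℝ) ^ n / ((n : ℝ) + 1) := by
  induction N with
  | zero => norm_num
  | succ N ih =>
    rw [sum_range_succ, sum_range_succ, ih, pow_succ]
    push_cast
    field_simp
    ring

theorem hasSum_neg_one_pow_mul_four_div :
    HasSum (fun n : ℕ ↦ (-1 : ℝ) ^ n * 4 / (((n : ℝ) + 1) * (2 * n + 1) * (2 * n + 3)))
      (4 - 4 * Real.log 2) := by
  have hs : Summable fun n : ℕ ↦
      (-1 : ℝ) ^ n * 4 / (((n : ℝ) + 1) * (2 * n + 1) * (2 * n + 3)) := by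
    refine .of_norm_bounded ((summable_one_div_nat_add_one_pow (p := 3) (by norm_num)).mul_left 4)
      fun n ↦ ?_
    rw [norm_div, norm_mul, norm_pow, norm_neg, norm_one, one_pow, one_mul,
      Real.norm_of_nonneg (by positivity), Real.norm_of_nonneg (by positivity), mul_one_div]
    gcongr
    calc ((n : ℝ) + 1) ^ 3 = (n + 1) * (n + 1) * (n + 1) := by ring
      _ ≤ (n + 1) * (2 * n + 1) * (2 * n + 3) := by gcongr <;> linarith
  have htail : Tendsto (fun N : ℕ ↦ 4 * (-1 : ℝ) ^ N / (2 * N + 1)) atTop (𝓝 0) := by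
    refine squeeze_zero_norm (fun N ↦ ?_)
      (by simpa using (tendsto_one_div_add_atTop_nhds_zero_nat (𝕜 := ℝ)).const_mul 4)
    rw [norm_div, norm_mul, norm_pow, norm_neg, norm_one, one_pow, mul_one,
      Real.norm_ofNat, Real.norm_of_nonneg (by positivity), ← div_eq_mul_inv]
    gcongr
    linarith
  rw [hs.hasSum_iff_tendsto_nat]
  simp only [sum_range_neg_one_pow_mul_four_div]
  simpa using (tendsto_const_nhds.sub htail).sub
    (tendsto_sum_range_neg_one_pow_div_nat_add_one.const_mul 4)

theorem tsum_neg_one_pow_div_mul_mul_nat_add_one_pow_three :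
    ∑' n : ℕ, (-1 : ℝ) ^ n / ((2 * n + 1) * (2 * n + 3) * ((n : ℝ) + 1) ^ 3) =
      4 - 4 * Real.log 2 - 3 / 4 * ∑' n : ℕ, 1 / ((n : ℝ) + 1) ^ 3 := by
  have hsplit (n : ℕ) : (-1 : ℝ) ^ n / ((2 * n + 1) * (2 * n + 3) * ((n : ℝ) + 1) ^ 3) =
      (-1 : ℝ) ^ n * 4 / (((n : ℝ) + 1) * (2 * n + 1) * (2 * n + 3)) -
        (-1 : ℝ) ^ n / ((n : ℝ) + 1) ^ 3 := by
    field_simp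
    ring
  rw [tsum_congr hsplit, (hasSum_neg_one_pow_mul_four_div.sub
    (hasSum_neg_one_pow_div_nat_add_one_pow (p := 3) (by norm_num))).tsum_eq]
  norm_num

theorem riemannZeta_natCast_eq_ofReal_tsum {k : ℕ} (hk : 1 < k) :
    riemannZeta k = ((∑' n : ℕ, 1 / ((n : ℝ) + 1) ^ k : ℝ) : ℂ) := by
  rw [zeta_eq_tsum_one_div_nat_add_one_cpow (by simpa using hk), Complex.ofReal_tsum]
  push_cast
  simp only [Complex.cpow_natCast]

theorem three_zeta3_add_sixteen_log_two_series :
    3 * riemannZeta 3 + 16 * (Real.log 2 : ℂ) =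
      16 - 4 * ∑' n : ℕ, (-1 : ℂ) ^ n /
        ((2 * (n : ℂ) + 1) * (2 * (n : ℂ) + 3) * ((n : ℂ) + 1) ^ 3) := by
  have hzeta : riemannZeta 3 = ((∑' n : ℕ, 1 / ((n : ℝ) + 1) ^ 3 : ℝ) : ℂ) := by
    exact_mod_cast riemannZeta_natCast_eq_ofReal_tsum (k := 3) (by norm_num)
  have hseries : ∑' n : ℕ, (-1 : ℂ) ^ n /
      ((2 * (n : ℂ) + 1) * (2 * (n : ℂ) + 3) * ((n : ℂ) + 1) ^ 3) =
      ((∑' n : ℕ, (-1 : ℝ) ^ n / ((2 * n + 1) * (2 * n + 3) * ((n : ℝ) + 1) ^ 3) : ℝ) :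
        ℂ) := by
    push_cast [Complex.ofReal_tsum]
    rfl
  rw [hzeta, hseries, tsum_neg_one_pow_div_mul_mul_nat_add_one_pow_three]
  push_cast
  ring
end
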